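/- arXiv:2101.04528 — 4 statements merged into one kernel-verified Lean document; each statement's English description precedes it below -/
import Mathlib

section
/- For every integer k with 0 ≤ k ≤ n−1, the linear map W_k : ⋀^k E → ⋀^{k+2}E defined by W_k(α) = ω ∧ α is injective. -/
/-
The bivector `ω` induces `ω♯ : E* → E`, `f ↦ ι_f ω`, which is skew. It is injective: if
`ι_f ω = 0` then `ι_f (ω ^ n) = 0`, whereas for `f ≠ 0` contraction with `f` is injective on the top
degree `⋀^{2n} E`, and `ω ^ n ≠ 0`. With `ψ = (ω♯)⁻¹` and a basis `b`, the operator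
`Λ = ∑ ι_{ψ bᵢ} ι_{bⁱ}` lowers degrees by two and satisfies the `sl₂` relation
`Λ (ω ∧ x) - ω ∧ Λ x = (2d - 2n) x` on `⋀^d E`. If `ω ∧ x = 0` with `x ∈ ⋀^d E`, this yields
`ω ∧ Λ^{m+1} x = (m+1)(2n - 2d + 2m) Λ^m x`; for `d < n` the coefficients never vanish, and
`Λ^m x = 0` once `2m > d`, so descending along `m` gives `x = 0`.
-/

open ExteriorAlgebra

/-- The wedge-multiplication map `W_k : ⋀^k E → ⋀^{k+2} E`, `α ↦ ω ∧ α`. -/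
noncomputable def wedgeOmega {E : Type*} [AddCommGroup E] [Module ℝ E]
    (ω : ExteriorAlgebra ℝ E) (hω : ω ∈ ⋀[ℝ]^2 E) (k : ℕ) :
    (⋀[ℝ]^k E) →ₗ[ℝ] (⋀[ℝ]^(k+2) E) where
  toFun α := ⟨ω * (α : ExteriorAlgebra ℝ E), by
    have : ω * (α : ExteriorAlgebra ℝ E) ∈ (⋀[ℝ]^2 E) * (⋀[ℝ]^k E) :=
      Submodule.mul_mem_mul hω α.2
    rwa [← pow_add, add_comm] at this⟩
  map_add' α β := Subtype.ext (by simp [mul_add])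
  map_smul' c α := Subtype.ext (by simp [mul_smul_comm])

open CliffordAlgebra

section Contraction

variable {R M : Type*} [CommRing R] [AddCommGroup M] [Module R M]

theorem contractLeft_eq_zero_of_mem_exteriorPower_zero (f : Module.Dual R M)
    {x : ExteriorAlgebra R M} (hx : x ∈ ⋀[R]^0 M) : contractLeft f x = 0 := by
  obtain ⟨r, rfl⟩ := Submodule.mem_one.mp hx
  exact contractLeft_algebraMap _ f r

theorem contractLeft_mem_exteriorPower (f : Module.Dual R M) {d : ℕ}
    {x : ExteriorAlgebra R M} (hx : x ∈ ⋀[R]^d M) : contractLeft f x ∈ ⋀[R]^(d - 1) M := by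
  induction hx using Submodule.pow_induction_on_left' with
  | algebraMap r => simp
  | add x y i _ _ hx hy => simpa using add_mem hx hy
  | mem_mul m hm i x hx ih =>
    obtain ⟨v, rfl⟩ := hm
    rw [contractLeft_ι_mul]
    refine sub_mem (Submodule.smul_mem _ _ hx) ?_
    rcases i with _ | i
    · simp [contractLeft_eq_zero_of_mem_exteriorPower_zero f hx]
    · have hv : ι R v ∈ ⋀[R]^1 M := by simp [exteriorPower]
      simpa [add_comm 1 i] using SetLike.mul_mem_graded hv ih

theorem contractLeft_mul_of_mem_exteriorPower_two (f : Module.Dual R M)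
    {ω : ExteriorAlgebra R M} (hω : ω ∈ ⋀[R]^2 M) (x : ExteriorAlgebra R M) :
    contractLeft f (ω * x) = contractLeft f ω * x + ω * contractLeft f x := by
  rw [exteriorPower, pow_two] at hω
  induction hω using Submodule.mul_induction_on' with
  | mem_mul_mem _ hu _ hv =>
    obtain ⟨u, rfl⟩ := hu
    obtain ⟨v, rfl⟩ := hv
    simp only [mul_assoc, contractLeft_ι_mul, contractLeft_ι, mul_sub, sub_mul, smul_mul_assoc,
      mul_smul_comm, Algebra.algebraMap_eq_smul_one, one_mul]
    abel
  | add a _ b _ ha hb =>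
    simp only [add_mul, map_add, ha, hb]
    abel

theorem contractLeft_pow_eq_zero (f : Module.Dual R M) {ω : ExteriorAlgebra R M}
    (hω : ω ∈ ⋀[R]^2 M) (hf : contractLeft f ω = 0) (m : ℕ) : contractLeft f (ω ^ m) = 0 := by
  induction m with
  | zero => simp
  | succ m ih => rw [pow_succ', contractLeft_mul_of_mem_exteriorPower_two f hω, hf, ih]; simp

theorem sum_ι_mul_contractLeft {I : Type*} [Fintype I] (e : I → M) (e' : I → Module.Dual R M)
    (he : ∀ v, ∑ i, e' i v • e i = v) {d : ℕ} {x : ExteriorAlgebra R M} (hx : x ∈ ⋀[R]^d M) :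
    ∑ i, ι R (e i) * contractLeft (e' i) x = (d : R) • x := by
  induction hx using Submodule.pow_induction_on_left' with
  | algebraMap r => simp
  | add x y i _ _ hx hy => simp [mul_add, Finset.sum_add_distrib, hx, hy, smul_add]
  | mem_mul m hm i x hx ih =>
    obtain ⟨v, rfl⟩ := hm
    have hterm (j : I) : ι R (e j) * contractLeft (e' j) (ι R v * x) =
        ι R (e' j v • e j) * x + ι R v * (ι R (e j) * contractLeft (e' j) x) := by
      have hswap : ι R (e j) * ι R v = -(ι R v * ι R (e j)) :=
        eq_neg_of_add_eq_zero_left (ι_add_mul_swap _ _)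
      rw [contractLeft_ι_mul, mul_sub, ← mul_assoc, hswap, map_smul, mul_smul_comm, smul_mul_assoc]
      noncomm_ring
    rw [Finset.sum_congr rfl fun j _ => hterm j, Finset.sum_add_distrib, ← Finset.sum_mul,
      ← map_sum, he, ← Finset.mul_sum, ih, mul_smul_comm]
    push_cast
    module

end Contraction

section TopDegree

variable {K M : Type*} [Field K] [AddCommGroup M] [Module K M] [FiniteDimensional K M]

theorem exteriorPower_eq_bot_of_finrank_lt {m : ℕ} (hm : Module.finrank K M < m) :
    ⋀[K]^m M = ⊥ := by
  rw [← Submodule.finrank_eq_zero, exteriorPower.finrank_eq, Nat.choose_eq_zero_of_lt hm]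

theorem eq_ι_mul_contractLeft_of_finrank_le {m : ℕ} (hm : Module.finrank K M ≤ m)
    {x : ExteriorAlgebra K M} (hx : x ∈ ⋀[K]^m M) {f : Module.Dual K M} {v : M} (hv : f v = 1) :
    x = ι K v * contractLeft f x := by
  have hv_mem : ι K v ∈ ⋀[K]^1 M := by simp [exteriorPower]
  have hvx : ι K v * x = 0 := by
    simpa [exteriorPower_eq_bot_of_finrank_lt (show Module.finrank K M < 1 + m by omega)] using
      SetLike.mul_mem_graded hv_mem hx
  simpa [contractLeft_ι_mul, hv, sub_eq_zero] using congrArg (contractLeft f) hvx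

end TopDegree

section Bivector

variable {R M : Type*} [CommRing R] [AddCommGroup M] [Module R M]

noncomputable def bivectorSharp (ω : ExteriorAlgebra R M) : Module.Dual R M →ₗ[R] M :=
  ιInv ∘ₗ (contractLeft (Q := 0)).flip ω

variable {ω : ExteriorAlgebra R M}

theorem ι_bivectorSharp (hω : ω ∈ ⋀[R]^2 M) (f : Module.Dual R M) :
    ι R (bivectorSharp ω f) = contractLeft f ω := by
  obtain ⟨v, hv⟩ : contractLeft f ω ∈ LinearMap.range (ι R) := by
    simpa [exteriorPower] using contractLeft_mem_exteriorPower f hω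
  simp [bivectorSharp, ← hv, ι_leftInverse v]

theorem apply_bivectorSharp_eq_neg (hω : ω ∈ ⋀[R]^2 M) (f g : Module.Dual R M) :
    g (bivectorSharp ω f) = -f (bivectorSharp ω g) := by
  have h := contractLeft_comm (Q := 0) g f ω
  rw [← ι_bivectorSharp hω, ← ι_bivectorSharp hω, contractLeft_ι, contractLeft_ι, ← map_neg] at h
  exact (algebraMap_inj _ _ _).mp h

theorem bivectorSharp_bijective {K V : Type*} [Field K] [AddCommGroup V] [Module K V]
    [FiniteDimensional K V] {ω : ExteriorAlgebra K V} (hω : ω ∈ ⋀[K]^2 V) {n : ℕ}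
    (hdim : Module.finrank K V ≤ 2 * n) (hωn : ω ^ n ≠ 0) :
    Function.Bijective (bivectorSharp ω) := by
  suffices Function.Injective (bivectorSharp ω) from
    ⟨this, (LinearMap.injective_iff_surjective_of_finrank_eq_finrank
      Subspace.dual_finrank_eq).mp this⟩
  rw [← LinearMap.ker_eq_bot, LinearMap.ker_eq_bot']
  intro f hf
  by_contra hf0
  obtain ⟨v, hv⟩ : ∃ v, f v = 1 := by
    obtain ⟨w, hw⟩ := DFunLike.ne_iff.mp hf0
    exact ⟨(f w)⁻¹ • w, by simp [inv_mul_cancel₀ hw]⟩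
  have hf : contractLeft f ω = 0 := by rw [← ι_bivectorSharp hω, hf, map_zero]
  have hωn_mem : ω ^ n ∈ ⋀[K]^(2 * n) V := by
    simpa [mul_comm] using SetLike.pow_mem_graded n hω
  apply hωn
  rw [eq_ι_mul_contractLeft_of_finrank_le hdim hωn_mem hv,
    contractLeft_pow_eq_zero f hω hf, mul_zero]

end Bivector

section DualLefschetz

variable {R M I : Type*} [CommRing R] [AddCommGroup M] [Module R M] [Fintype I]

noncomputable def dualLefschetz (b : Module.Basis I R M) (ψ : M →ₗ[R] Module.Dual R M) :
    Module.End R (ExteriorAlgebra R M) :=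
  ∑ i, contractLeft (ψ (b i)) ∘ₗ contractLeft (b.coord i)

variable (b : Module.Basis I R M) (ψ : M →ₗ[R] Module.Dual R M)

theorem dualLefschetz_apply (x : ExteriorAlgebra R M) :
    dualLefschetz b ψ x = ∑ i, contractLeft (ψ (b i)) (contractLeft (b.coord i) x) := by
  simp [dualLefschetz, LinearMap.sum_apply]

theorem dualLefschetz_mem_exteriorPower {d : ℕ} {x : ExteriorAlgebra R M}
    (hx : x ∈ ⋀[R]^d M) : dualLefschetz b ψ x ∈ ⋀[R]^(d - 2) M := by
  rw [dualLefschetz_apply]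
  exact Submodule.sum_mem _ fun i _ => by
    simpa [Nat.sub_sub] using contractLeft_mem_exteriorPower _ (contractLeft_mem_exteriorPower _ hx)

theorem dualLefschetz_pow_mem_exteriorPower {d : ℕ} {x : ExteriorAlgebra R M}
    (hx : x ∈ ⋀[R]^d M) (m : ℕ) : (dualLefschetz b ψ ^ m) x ∈ ⋀[R]^(d - 2 * m) M := by
  induction m with
  | zero => simpa using hx
  | succ m ih =>
    rw [pow_succ', Module.End.mul_apply]
    simpa [Nat.sub_sub, mul_add] using dualLefschetz_mem_exteriorPower b ψ ih

theorem dualLefschetz_eq_zero_of_lt_two {d : ℕ} (hd : d < 2) {x : ExteriorAlgebra R M}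
    (hx : x ∈ ⋀[R]^d M) : dualLefschetz b ψ x = 0 := by
  have hx' (i : I) : contractLeft (b.coord i) x ∈ ⋀[R]^0 M := by
    simpa [show d - 1 = 0 by omega] using contractLeft_mem_exteriorPower (b.coord i) hx
  simp [dualLefschetz_apply, contractLeft_eq_zero_of_mem_exteriorPower_zero _ (hx' _)]

theorem dualLefschetz_pow_eq_zero {d m : ℕ} (hdm : d < 2 * m) {x : ExteriorAlgebra R M}
    (hx : x ∈ ⋀[R]^d M) : (dualLefschetz b ψ ^ m) x = 0 := by
  obtain ⟨m, rfl⟩ : ∃ m', m = m' + 1 := ⟨m - 1, by omega⟩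
  rw [pow_succ', Module.End.mul_apply]
  exact dualLefschetz_eq_zero_of_lt_two b ψ (by omega)
    (dualLefschetz_pow_mem_exteriorPower b ψ hx m)

variable {ω : ExteriorAlgebra R M} (hω : ω ∈ ⋀[R]^2 M)
include hω

theorem contractLeft_contractLeft_mul (f g : Module.Dual R M) (x : ExteriorAlgebra R M) :
    contractLeft f (contractLeft g (ω * x)) = ω * contractLeft f (contractLeft g x)
      + f (bivectorSharp ω g) • x - ι R (bivectorSharp ω g) * contractLeft f x
      + ι R (bivectorSharp ω f) * contractLeft g x := by
  rw [contractLeft_mul_of_mem_exteriorPower_two g hω, map_add, ← ι_bivectorSharp hω g,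
    contractLeft_ι_mul, contractLeft_mul_of_mem_exteriorPower_two f hω, ← ι_bivectorSharp hω f]
  abel

variable {ψ} (hψ : ∀ v, bivectorSharp ω (ψ v) = v)
include hψ

theorem apply_swap_of_rightInverse_bivectorSharp (u v : M) : ψ u v = -ψ v u := by
  conv_lhs => rw [← hψ v]
  rw [apply_bivectorSharp_eq_neg hω, hψ]

theorem dualLefschetz_mul_of_mem_exteriorPower {d : ℕ} {x : ExteriorAlgebra R M}
    (hx : x ∈ ⋀[R]^d M) :
    dualLefschetz b ψ (ω * x) = ω * dualLefschetz b ψ x + (2 * d - Fintype.card I : R) • x := by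
  have htrace : ∑ i, ψ (b i) (bivectorSharp ω (b.coord i)) = -(Fintype.card I : R) := by
    simp [apply_bivectorSharp_eq_neg hω _ (ψ _), hψ]
  have hEuler : ∑ i, ι R (b i) * contractLeft (b.coord i) x = (d : R) • x :=
    sum_ι_mul_contractLeft b b.coord (by simp) hx
  have hEuler' : ∑ i, ι R (bivectorSharp ω (b.coord i)) * contractLeft (ψ (b i)) x =
      -((d : R) • x) := by
    have h := sum_ι_mul_contractLeft (fun i => -bivectorSharp ω (b.coord i)) (fun i => ψ (b i))
      (fun v => ?_) hx
    · simpa [neg_eq_iff_eq_neg] using h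
    · calc ∑ i, ψ (b i) v • -bivectorSharp ω (b.coord i)
          = ∑ i, ψ v (b i) • bivectorSharp ω (b.coord i) := by
            simp [apply_swap_of_rightInverse_bivectorSharp hω hψ (b _) v]
        _ = bivectorSharp ω (ψ v) := by
            conv_rhs => rw [← b.sum_dual_apply_smul_coord (ψ v), map_sum]
            simp only [map_smul]
        _ = v := hψ v
  simp only [dualLefschetz_apply, contractLeft_contractLeft_mul hω, hψ, Finset.sum_add_distrib,
    Finset.sum_sub_distrib, ← Finset.sum_smul, ← Finset.mul_sum, htrace, hEuler, hEuler']
  module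

theorem mul_dualLefschetz_pow_succ {d : ℕ} {x : ExteriorAlgebra R M} (hx : x ∈ ⋀[R]^d M)
    (h0 : ω * x = 0) (m : ℕ) :
    ω * (dualLefschetz b ψ ^ (m + 1)) x =
      ((m + 1) * (Fintype.card I - 2 * d + 2 * m) : R) • (dualLefschetz b ψ ^ m) x := by
  have hsucc (j : ℕ) : dualLefschetz b ψ ((dualLefschetz b ψ ^ j) x) =
      (dualLefschetz b ψ ^ (j + 1)) x := by
    rw [pow_succ', Module.End.mul_apply]
  induction m with
  | zero =>
    have hc := dualLefschetz_mul_of_mem_exteriorPower b hω hψ hx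
    rw [h0, map_zero] at hc
    simp only [zero_add, pow_one, pow_zero, Module.End.one_apply]
    linear_combination (norm := module) -hc
  | succ m ih =>
    by_cases hdm : 2 * (m + 1) ≤ d
    · have hc := dualLefschetz_mul_of_mem_exteriorPower b hω hψ
        (dualLefschetz_pow_mem_exteriorPower b ψ hx (m + 1))
      rw [ih, map_smul, hsucc, hsucc] at hc
      push_cast [Nat.cast_sub hdm] at hc ⊢
      linear_combination (norm := module) -hc
    · rw [dualLefschetz_pow_eq_zero b ψ (by omega) hx, dualLefschetz_pow_eq_zero b ψ (by omega) hx,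
        mul_zero, smul_zero]

end DualLefschetz

theorem eq_zero_of_mul_eq_zero_of_mem_exteriorPower {K M I : Type*} [Field K] [CharZero K]
    [AddCommGroup M] [Module K M] [Fintype I] (b : Module.Basis I K M)
    {ψ : M →ₗ[K] Module.Dual K M} {ω : ExteriorAlgebra K M} (hω : ω ∈ ⋀[K]^2 M)
    (hψ : ∀ v, bivectorSharp ω (ψ v) = v) {d : ℕ} (hd : 2 * d < Fintype.card I)
    {x : ExteriorAlgebra K M} (hx : x ∈ ⋀[K]^d M) (h0 : ω * x = 0) : x = 0 := by
  suffices ∀ m, (dualLefschetz b ψ ^ m) x = 0 → x = 0 from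
    this (d + 1) (dualLefschetz_pow_eq_zero b ψ (by omega) hx)
  intro m
  induction m with
  | zero => simp
  | succ m ih =>
    intro hm
    have hcoef : ((m + 1) * (Fintype.card I - 2 * d + 2 * m) : K) ≠ 0 := by
      have : ((m + 1) * (Fintype.card I - 2 * d + 2 * m) : K) =
          ((m + 1) * (Fintype.card I - 2 * d + 2 * m) : ℕ) := by
        push_cast [Nat.cast_sub hd.le]
        ring
      rw [this, Nat.cast_ne_zero]
      exact Nat.mul_ne_zero (by omega) (by omega)
    have hc : ((m + 1) * (Fintype.card I - 2 * d + 2 * m) : K) • (dualLefschetz b ψ ^ m) x = 0 := by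
      rw [← mul_dualLefschetz_pow_succ b hω hψ hx h0, hm, mul_zero]
    exact ih ((smul_eq_zero.mp hc).resolve_left hcoef)

/-- for `0 ≤ k ≤ n-1`, the map `W_k` is injective. -/
theorem wedgeOmega_injective {E : Type*} [AddCommGroup E] [Module ℝ E]
    [FiniteDimensional ℝ E] (n : ℕ) (hn : 1 ≤ n)
    (hdim : Module.finrank ℝ E = 2 * n)
    (ω : ExteriorAlgebra ℝ E) (hω : ω ∈ ⋀[ℝ]^2 E) (hωn : ω ^ n ≠ 0)
    (k : ℕ) (hk : k ≤ n - 1) :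
    Function.Injective (wedgeOmega ω hω k) := by
  let sharpEquiv := LinearEquiv.ofBijective _ (bivectorSharp_bijective hω hdim.le hωn)
  have hψ (v : E) : bivectorSharp ω (sharpEquiv.symm v) = v := sharpEquiv.apply_symm_apply v
  have hk' : 2 * k < Fintype.card (Fin (Module.finrank ℝ E)) := by
    rw [Fintype.card_fin, hdim]
    omega
  rw [← LinearMap.ker_eq_bot, LinearMap.ker_eq_bot']
  intro α hα
  exact Subtype.ext <| eq_zero_of_mul_eq_zero_of_mem_exteriorPower (Module.finBasis ℝ E) hω hψ hk'
    α.2 (congrArg Subtype.val hα)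
end

section
/- For every integer k with 0 ≤ k ≤ n and every α ∈ ⋀^k E, the following are equivalent: (i) α ∧ η = 0 for every η ∈ ⋀^{2n−k}E with ω ∧ η = 0; (ii) α ∈ ω ∧ ⋀^{k−2}E, i.e. α = ω ∧ β for some β ∈ ⋀^{k−2}E (for k ≤ 1 this means α = 0). In other words, the wedge-product pairing between ⋀^k E / (ω ∧ ⋀^{k−2}E) and ker W_{2n−k} with values in ⋀^{2n}E has trivial left kernel. -/
open ExteriorAlgebra

/-- Integer-indexed exterior power: `⋀^j E` for `j ≥ 0`, and `{0}` for `j < 0`. -/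
noncomputable def exteriorPowerZ (E : Type*) [AddCommGroup E] [Module ℝ E] (j : ℤ) :
    Submodule ℝ (ExteriorAlgebra ℝ E) :=
  if 0 ≤ j then ⋀[ℝ]^j.toNat E else ⊥

/-!
Let `N = dim E` and let `φ` read off the top-degree coefficient. The pairing
`⋀^j × ⋀^(N-j) → ℝ`, `(x, y) ↦ φ (x ∧ y)`, is perfect: in the monomial basis, `e_s ∧ e_t` is
`±e_univ` when `t = sᶜ` and has no top-degree component otherwise. Since `ω` is central,
`φ (ω ∧ β ∧ η) = φ (β ∧ ω ∧ η)`: the map `ω ∧ -` on `⋀^(k-2)` is the transpose of the map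
`W = ω ∧ -` on `⋀^(N-k)`. If `α` kills `ker W`, then `φ (α ∧ -) = g ∘ W` for some functional `g`,
perfectness writes `g = φ (β ∧ -)` with `β ∈ ⋀^(k-2)`, and then `φ ((α - ω ∧ β) ∧ -) = 0` forces
`α = ω ∧ β`.
-/

open Module

namespace ExteriorAlgebra

section CommRing

variable {R M I : Type*} [CommRing R] [AddCommGroup M] [Module R M]

theorem commute_of_mem_exteriorPower_two {w : ExteriorAlgebra R M} (hw : w ∈ ⋀[R]^2 M)
    (x : ExteriorAlgebra R M) : Commute w x := by
  have anticomm (p q : M) : ι R p * ι R q = -(ι R q * ι R p) :=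
    eq_neg_of_add_eq_zero_left (ι_add_mul_swap p q)
  rw [exteriorPower, sq] at hw
  refine Submodule.mul_induction_on hw ?_ fun y z hy hz => hy.add_left hz
  rintro _ ⟨u, rfl⟩ _ ⟨v, rfl⟩
  induction x using ExteriorAlgebra.induction with
  | algebraMap r => exact Algebra.commute_algebraMap_right r _
  | ι z =>
    calc ι R u * ι R v * ι R z = ι R u * (ι R v * ι R z) := mul_assoc _ _ _
      _ = ι R z * (ι R u * ι R v) := by
        rw [anticomm v z, mul_neg, ← mul_assoc, anticomm u z, neg_mul, neg_neg, mul_assoc]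
  | mul a c ha hc => exact ha.mul_right hc
  | add a c ha hc => exact ha.add_right hc

variable [LinearOrder I]

theorem exteriorPower_eq_span_basis (b : Basis I R M) (n : ℕ) :
    ⋀[R]^n M = Submodule.span R (b.ExteriorAlgebra '' {s | s.card = n}) := by
  rw [← exteriorPower.ιMulti_family_span_fixedDegree_of_span R b.span_eq]
  congr 1
  ext x
  constructor
  · rintro ⟨s, rfl⟩
    exact ⟨s, s.2, basis_apply_powersetCard b s⟩
  · rintro ⟨s, hs, rfl⟩
    exact ⟨Set.powersetCard.ofCard hs, (basis_apply_ofCard b hs).symm⟩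

theorem basis_mul_basis_of_disjoint (b : Basis I R M) {s t : Finset I} (h : Disjoint s t) :
    ∃ ε : ℤˣ, b.ExteriorAlgebra s * b.ExteriorAlgebra t = ε • b.ExteriorAlgebra (s ∪ t) := by
  rw [← Finset.disjUnion_eq_union s t h]
  exact ⟨_, basis_mul_of_disjoint b (Set.powersetCard.ofCard (rfl : s.card = _))
    (Set.powersetCard.ofCard (rfl : t.card = _)) h⟩

theorem basis_mul_basis_of_not_disjoint (b : Basis I R M) {s t : Finset I} (h : ¬Disjoint s t) :
    b.ExteriorAlgebra s * b.ExteriorAlgebra t = 0 :=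
  basis_mul_of_not_disjoint b (Set.powersetCard.ofCard (rfl : s.card = _))
    (Set.powersetCard.ofCard (rfl : t.card = _)) h

variable [Fintype I]

theorem exteriorPower_eq_bot_of_card_lt (b : Basis I R M) {n : ℕ} (hn : Fintype.card I < n) :
    ⋀[R]^n M = ⊥ := by
  rw [exteriorPower_eq_span_basis b, Submodule.span_eq_bot]
  rintro _ ⟨s, hs, rfl⟩
  exact absurd (Finset.card_le_univ s) (by rw [hs]; omega)

noncomputable def topCoord (b : Basis I R M) : ExteriorAlgebra R M →ₗ[R] R :=
  b.ExteriorAlgebra.coord Finset.univ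

theorem topCoord_eq_zero_of_mem (b : Basis I R M) {n : ℕ} (hn : n ≠ Fintype.card I)
    {x : ExteriorAlgebra R M} (hx : x ∈ ⋀[R]^n M) : topCoord b x = 0 := by
  rw [exteriorPower_eq_span_basis b, Basis.mem_span_image] at hx
  by_contra hne
  exact hn (hx (Finsupp.mem_support_iff.mpr hne)).symm

theorem topCoord_basis_mul_basis_eq_zero (b : Basis I R M) {s t : Finset I} (h : s ≠ tᶜ) :
    topCoord b (b.ExteriorAlgebra s * b.ExteriorAlgebra t) = 0 := by
  by_cases hd : Disjoint s t
  · obtain ⟨ε, he⟩ := basis_mul_basis_of_disjoint b hd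
    have hne : s ∪ t ≠ Finset.univ := fun hu =>
      h (eq_compl_iff_isCompl.mpr ⟨hd, codisjoint_iff.mpr hu⟩)
    rw [he, topCoord, Units.smul_def, map_zsmul, Basis.coord_apply, Basis.repr_self,
      Finsupp.single_eq_of_ne hne.symm, smul_zero]
  · rw [basis_mul_basis_of_not_disjoint b hd, map_zero]

theorem isUnit_topCoord_basis_mul_basis_compl (b : Basis I R M) (s : Finset I) :
    IsUnit (topCoord b (b.ExteriorAlgebra s * b.ExteriorAlgebra sᶜ)) := by
  obtain ⟨ε, he⟩ := basis_mul_basis_of_disjoint b (disjoint_compl_right (a := s))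
  rw [he, Finset.union_compl, topCoord, Units.smul_def, map_zsmul, Basis.coord_apply,
    Basis.repr_self, Finsupp.single_eq_same, zsmul_one]
  exact ε.isUnit.map (Int.castRingHom R)

theorem eq_zero_of_forall_topCoord_mul_basis_eq_zero (b : Basis I R M) {x : ExteriorAlgebra R M}
    (h : ∀ t, topCoord b (x * b.ExteriorAlgebra t) = 0) : x = 0 := by
  refine b.ExteriorAlgebra.ext_elem fun s => ?_
  have hs := h sᶜ
  rw [← b.ExteriorAlgebra.sum_repr x, Finset.sum_mul, map_sum, Fintype.sum_eq_single s ?_,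
    smul_mul_assoc, map_smul, smul_eq_mul] at hs
  · rw [(isUnit_topCoord_basis_mul_basis_compl b s).mul_left_eq_zero.mp hs, map_zero,
      Finsupp.zero_apply]
  · intro u hu
    rw [smul_mul_assoc, map_smul, topCoord_basis_mul_basis_eq_zero b (by rwa [compl_compl]),
      smul_zero]

theorem eq_zero_of_forall_topCoord_mul_eq_zero (b : Basis I R M) {k : ℕ}
    (hk : k ≤ Fintype.card I) {x : ExteriorAlgebra R M} (hx : x ∈ ⋀[R]^k M)
    (h : ∀ y ∈ ⋀[R]^(Fintype.card I - k) M, topCoord b (x * y) = 0) : x = 0 := by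
  refine eq_zero_of_forall_topCoord_mul_basis_eq_zero b fun t => ?_
  have ht : b.ExteriorAlgebra t ∈ ⋀[R]^t.card M := by
    rw [exteriorPower_eq_span_basis b]
    exact Submodule.subset_span ⟨t, rfl, rfl⟩
  by_cases hcard : t.card = Fintype.card I - k
  · exact h _ (hcard ▸ ht)
  · exact topCoord_eq_zero_of_mem b (by omega) (SetLike.mul_mem_graded hx ht)

theorem eq_zero_of_forall_mul_eq_zero (b : Basis I R M) {w : ExteriorAlgebra R M}
    (hw : w ∈ ⋀[R]^2 M) {k : ℕ} (hk : k < 2) (hkN : k ≤ Fintype.card I)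
    {α : ExteriorAlgebra R M} (hα : α ∈ ⋀[R]^k M)
    (H : ∀ η ∈ ⋀[R]^(Fintype.card I - k) M, w * η = 0 → α * η = 0) : α = 0 := by
  refine eq_zero_of_forall_topCoord_mul_eq_zero b hkN hα fun η hη => ?_
  have hwη : w * η ∈ ⋀[R]^(2 + (Fintype.card I - k)) M := SetLike.mul_mem_graded hw hη
  rw [exteriorPower_eq_bot_of_card_lt b (by omega), Submodule.mem_bot] at hwη
  rw [H η hη hwη, map_zero]

end CommRing

section Field

variable {K M I : Type*} [Field K] [AddCommGroup M] [Module K M] [LinearOrder I] [Fintype I]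

theorem exists_topCoord_mul_eq (b : Basis I K M) {j : ℕ} (hj : j ≤ Fintype.card I)
    (g : Dual K (⋀[K]^j M)) :
    ∃ β ∈ ⋀[K]^(Fintype.card I - j) M, ∀ y : ⋀[K]^j M, topCoord b (β * y) = g y := by
  have := Module.Finite.of_basis b
  let L : ⋀[K]^(Fintype.card I - j) M →ₗ[K] Dual K (⋀[K]^j M) :=
    ((LinearMap.mul K _).compr₂ (topCoord b)).compl₁₂ (Submodule.subtype _) (Submodule.subtype _)
  have hL : Function.Injective L := by
    refine (injective_iff_map_eq_zero L).mpr fun β hβ => Subtype.ext ?_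
    refine eq_zero_of_forall_topCoord_mul_eq_zero b (Nat.sub_le _ _) β.2 ?_
    rw [Nat.sub_sub_self hj]
    exact fun y hy => LinearMap.congr_fun hβ ⟨y, hy⟩
  have hrank : finrank K (⋀[K]^(Fintype.card I - j) M) = finrank K (Dual K (⋀[K]^j M)) := by
    rw [Subspace.dual_finrank_eq, exteriorPower.finrank_eq, exteriorPower.finrank_eq,
      finrank_eq_card_basis b, Nat.choose_symm hj]
  obtain ⟨β, hβ⟩ := (LinearMap.injective_iff_surjective_of_finrank_eq_finrank hrank).mp hL g
  exact ⟨β, β.2, fun y => LinearMap.congr_fun hβ y⟩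

theorem exists_eq_mul_of_forall_mul_eq_zero (b : Basis I K M) {w : ExteriorAlgebra K M}
    (hw : w ∈ ⋀[K]^2 M) {k : ℕ} (hk : 2 ≤ k) (hkN : k ≤ Fintype.card I)
    {α : ExteriorAlgebra K M} (hα : α ∈ ⋀[K]^k M)
    (H : ∀ η ∈ ⋀[K]^(Fintype.card I - k) M, w * η = 0 → α * η = 0) :
    ∃ β ∈ ⋀[K]^(k - 2) M, α = w * β := by
  set m := Fintype.card I - k
  let T : ⋀[K]^m M →ₗ[K] ⋀[K]^(2 + m) M :=
    (LinearMap.mulLeft K w).restrict fun η hη => SetLike.mul_mem_graded hw hη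
  let f : Dual K (⋀[K]^m M) := topCoord b ∘ₗ LinearMap.mulLeft K α ∘ₗ Submodule.subtype _
  have hf : f ∈ (LinearMap.ker T).dualAnnihilator := by
    refine (Submodule.mem_dualAnnihilator _).mpr fun η hη => ?_
    simp only [f, LinearMap.comp_apply, LinearMap.mulLeft_apply, Submodule.subtype_apply,
      H η η.2 (congrArg Subtype.val hη), map_zero]
  rw [← LinearMap.range_dualMap_eq_dualAnnihilator_ker] at hf
  obtain ⟨g, hg⟩ := hf
  obtain ⟨β, hβ, hβg⟩ := exists_topCoord_mul_eq b (j := 2 + m) (by omega) g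
  rw [show Fintype.card I - (2 + m) = k - 2 by omega] at hβ
  refine ⟨β, hβ, sub_eq_zero.mp ?_⟩
  have hwβ : w * β ∈ ⋀[K]^k M := by
    simpa [show 2 + (k - 2) = k by omega] using SetLike.mul_mem_graded hw hβ
  refine eq_zero_of_forall_topCoord_mul_eq_zero b hkN (sub_mem hα hwβ) fun η hη => ?_
  have hgT : g (T ⟨η, hη⟩) = f ⟨η, hη⟩ := LinearMap.congr_fun hg ⟨η, hη⟩
  calc topCoord b ((α - w * β) * η) = f ⟨η, hη⟩ - topCoord b (β * (w * η)) := by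
        rw [sub_mul, map_sub, (commute_of_mem_exteriorPower_two hw β).eq, mul_assoc]; rfl
    _ = 0 := by rw [← hgT, ← hβg]; exact sub_self _

end Field

end ExteriorAlgebra

theorem wedge_annihilates_kerW_iff_general {E : Type*} [AddCommGroup E] [Module ℝ E]
    [FiniteDimensional ℝ E] (n : ℕ)
    (hdim : Module.finrank ℝ E = 2 * n)
    (ω : ExteriorAlgebra ℝ E) (hω : ω ∈ ⋀[ℝ]^2 E)
    (k : ℕ) (hk : k ≤ n) (α : ExteriorAlgebra ℝ E) (hα : α ∈ ⋀[ℝ]^k E) :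
    (∀ η ∈ ⋀[ℝ]^(2 * n - k) E, ω * η = 0 → α * η = 0) ↔
      ∃ β ∈ exteriorPowerZ E ((k : ℤ) - 2), α = ω * β := by
  let b := Module.finBasisOfFinrankEq ℝ E hdim
  have hkN : k ≤ Fintype.card (Fin (2 * n)) := by rw [Fintype.card_fin]; omega
  constructor
  · intro H
    rw [← Fintype.card_fin (2 * n)] at H
    rcases lt_or_ge k 2 with hk2 | hk2
    · refine ⟨0, zero_mem _, ?_⟩
      rw [mul_zero]
      exact eq_zero_of_forall_mul_eq_zero b hω hk2 hkN hα H
    · obtain ⟨β, hβ, rfl⟩ := exists_eq_mul_of_forall_mul_eq_zero b hω hk2 hkN hα H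
      refine ⟨β, ?_, rfl⟩
      rwa [exteriorPowerZ, if_pos (by omega), show ((k : ℤ) - 2).toNat = k - 2 by omega]
  · rintro ⟨β, -, rfl⟩ η - hωη
    rw [(commute_of_mem_exteriorPower_two hω β).eq, mul_assoc, hωη, mul_zero]

/-- for `0 ≤ k ≤ n` and `α ∈ ⋀^k E`, one has `α ∧ η = 0` for every
`η ∈ ⋀^{2n-k} E` with `ω ∧ η = 0`, if and only if `α = ω ∧ β` for some `β ∈ ⋀^{k-2} E`
(where `⋀^{k-2} E = {0}` if `k < 2`). -/
theorem wedge_annihilates_kerW_iff {E : Type*} [AddCommGroup E] [Module ℝ E]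
    [FiniteDimensional ℝ E] (n : ℕ) (hn : 1 ≤ n)
    (hdim : Module.finrank ℝ E = 2 * n)
    (ω : ExteriorAlgebra ℝ E) (hω : ω ∈ ⋀[ℝ]^2 E) (hωn : ω ^ n ≠ 0)
    (k : ℕ) (hk : k ≤ n) (α : ExteriorAlgebra ℝ E) (hα : α ∈ ⋀[ℝ]^k E) :
    (∀ η ∈ ⋀[ℝ]^(2 * n - k) E, ω * η = 0 → α * η = 0) ↔
      ∃ β ∈ exteriorPowerZ E ((k : ℤ) - 2), α = ω * β :=
  wedge_annihilates_kerW_iff_general n hdim ω hω k hk α hα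
end

section
/- For every integer ℓ ≥ 0 and every γ ∈ ⋀^ℓ F, one has γ ∈ J^ℓ (that is, γ ∧ θ = 0 and γ ∧ ω = 0) if and only if there exists α ∈ ⋀^{ℓ−1}E with ω ∧ α = 0 such that γ = θ ∧ α. -/
open ExteriorAlgebra

/-- The `j`-th exterior power of the subspace `E ⊆ F`, viewed inside the exterior
algebra of `F` (by convention `{0}` for `j < 0`, and `ℝ·1` for `j = 0`). -/
noncomputable def powE {F : Type*} [AddCommGroup F] [Module ℝ F]
    (E : Submodule ℝ F) (j : ℤ) : Submodule ℝ (ExteriorAlgebra ℝ F) :=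
  if 0 ≤ j then (Submodule.map (ExteriorAlgebra.ι ℝ) E) ^ j.toNat else ⊥

section Aux

variable {F : Type*} [AddCommGroup F] [Module ℝ F]

lemma powE_natCast (E : Submodule ℝ F) (k : ℕ) :
    powE E (k : ℤ) = (Submodule.map (ι ℝ) E) ^ k := by
  simp [powE]

lemma powE_neg_one (E : Submodule ℝ F) : powE E (-1 : ℤ) = ⊥ := by
  simp [powE]

lemma ι_swap (a b : F) : ι ℝ a * ι ℝ b = -(ι ℝ b * ι ℝ a) :=
  eq_neg_of_add_eq_zero_left (ι_add_mul_swap a b)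

lemma pair_commute (a b : F) (y : ExteriorAlgebra ℝ F) :
    Commute (ι ℝ a * ι ℝ b) y := by
  induction y using ExteriorAlgebra.induction with
  | algebraMap r => exact (Algebra.commutes r _).symm
  | ι v =>
      show _ = _
      rw [mul_assoc, ι_swap b v, mul_neg, ← mul_assoc, ι_swap a v, neg_mul, neg_neg,
        mul_assoc]
  | mul x y hx hy => exact hx.mul_right hy
  | add x y hx hy => exact hx.add_right hy

lemma even_commute {E : Submodule ℝ F} {w : ExteriorAlgebra ℝ F}
    (hw : w ∈ (Submodule.map (ι ℝ) E) ^ 2) (y : ExteriorAlgebra ℝ F) :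
    Commute w y := by
  rw [pow_two] at hw
  refine Submodule.mul_induction_on hw ?_ ?_
  · rintro _ ⟨a, -, rfl⟩ _ ⟨b, -, rfl⟩
    exact pair_commute a b y
  · intro x z hx hz
    exact hx.add_left hz

lemma theta_anticomm (θ : F) :
    ∀ (q : ℕ) (x : ExteriorAlgebra ℝ F),
      x ∈ (LinearMap.range (ι ℝ : F →ₗ[ℝ] ExteriorAlgebra ℝ F)) ^ q →
      x * ι ℝ θ = ((-1 : ℝ) ^ q) • (ι ℝ θ * x) := by
  intro q
  induction q with
  | zero =>
      intro x hx
      rw [pow_zero] at hx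
      obtain ⟨r, rfl⟩ := Submodule.mem_one.mp hx
      rw [pow_zero, one_smul, Algebra.commutes]
  | succ q ih =>
      intro x hx
      rw [pow_succ'] at hx
      refine Submodule.mul_induction_on hx ?_ ?_
      · rintro _ ⟨v, rfl⟩ n hn
        rw [mul_assoc, ih n hn, mul_smul_comm, ← mul_assoc, ι_swap v θ, neg_mul,
          ← mul_assoc, pow_succ]
        rw [smul_neg, ← neg_smul, ← mul_neg_one, mul_assoc]
      · intro a b ha hb
        rw [add_mul, ha, hb, mul_add, smul_add]

lemma contract_powE (E : Submodule ℝ F) (f : Module.Dual ℝ F)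
    (hfE : ∀ e ∈ E, f e = 0) :
    ∀ (k : ℕ) (x : ExteriorAlgebra ℝ F), x ∈ (Submodule.map (ι ℝ) E) ^ k →
      CliffordAlgebra.contractLeft (Q := (0 : QuadraticForm ℝ F)) f x = 0 := by
  intro k
  induction k with
  | zero =>
      intro x hx
      rw [pow_zero] at hx
      obtain ⟨r, rfl⟩ := Submodule.mem_one.mp hx
      exact CliffordAlgebra.contractLeft_algebraMap _ _ _
  | succ k ih =>
      intro x hx
      rw [pow_succ'] at hx
      refine Submodule.mul_induction_on hx ?_ ?_
      · rintro _ ⟨e, he, rfl⟩ n hn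
        rw [CliffordAlgebra.contractLeft_ι_mul, ih n hn, mul_zero, hfE e he,
          zero_smul, sub_zero]
      · intro a b ha hb
        rw [map_add, ha, hb, add_zero]

end Aux

section Decomp

variable {F : Type*} [AddCommGroup F] [Module ℝ F]

lemma pow_mono {M N : Submodule ℝ (ExteriorAlgebra ℝ F)} (h : M ≤ N) :
    ∀ k : ℕ, M ^ k ≤ N ^ k := by
  intro k
  induction k with
  | zero => rw [pow_zero, pow_zero]
  | succ p ih =>
      rw [pow_succ, pow_succ]
      exact mul_le_mul' ih h

lemma decomp (E : Submodule ℝ F) (θ : F)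
    (hsplit : ∀ v : F, ∃ e ∈ E, ∃ c : ℝ, v = e + c • θ) :
    ∀ (ℓ : ℕ) (γ : ExteriorAlgebra ℝ F),
      γ ∈ (LinearMap.range (ι ℝ : F →ₗ[ℝ] ExteriorAlgebra ℝ F)) ^ ℓ →
      ∃ β ∈ powE E (ℓ : ℤ), ∃ α ∈ powE E ((ℓ : ℤ) - 1), γ = β + ι ℝ θ * α := by
  intro ℓ
  induction ℓ with
  | zero =>
      intro γ hγ
      refine ⟨γ, ?_, 0, ?_, by simp⟩
      · rw [powE_natCast, pow_zero]
        rwa [pow_zero] at hγ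
      · exact Submodule.zero_mem _
  | succ m ih =>
      intro γ hγ
      rw [pow_succ'] at hγ
      refine Submodule.mul_induction_on hγ ?_ ?_
      · rintro _ ⟨v, rfl⟩ x hx
        obtain ⟨β, hβ, α, hα, rfl⟩ := ih x hx
        obtain ⟨e, he, c, rfl⟩ := hsplit v
        have hβP : β ∈ (Submodule.map (ι ℝ) E) ^ m := by rwa [powE_natCast] at hβ
        have hαP : ι ℝ e * α ∈ (Submodule.map (ι ℝ) E) ^ m := by
          cases m with
          | zero =>
              have h := hα
              rw [show ((0:ℕ):ℤ) - 1 = -1 by simp, powE_neg_one] at h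
              rw [Submodule.mem_bot] at h
              simp [h]
          | succ p =>
              have h := hα
              rw [show (((p:ℕ)+1:ℕ):ℤ) - 1 = (p:ℤ) by push_cast; ring, powE_natCast] at h
              rw [pow_succ']
              exact Submodule.mul_mem_mul ⟨e, he, rfl⟩ h
        have key : ι ℝ e * (ι ℝ θ * α) = -(ι ℝ θ * (ι ℝ e * α)) := by
          rw [← mul_assoc, ι_swap e θ, neg_mul, mul_assoc]
        have key2 : ι ℝ θ * (ι ℝ θ * α) = 0 := by
          rw [← mul_assoc, ι_sq_zero, zero_mul]
        refine ⟨ι ℝ e * β, ?_, c • β - ι ℝ e * α, ?_, ?_⟩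
        · rw [powE_natCast, pow_succ']
          exact Submodule.mul_mem_mul ⟨e, he, rfl⟩ hβP
        · rw [show (((m:ℕ)+1:ℕ):ℤ) - 1 = (m:ℤ) by push_cast; ring, powE_natCast]
          exact Submodule.sub_mem _ (Submodule.smul_mem _ _ hβP) hαP
        · rw [map_add, map_smul, add_mul, mul_add, mul_add, smul_mul_assoc,
            smul_mul_assoc, key2, key, mul_sub, mul_smul_comm]
          simp only [smul_zero, add_zero]
          abel
      · rintro x y hx hy
        obtain ⟨βx, hβx, αx, hαx, rfl⟩ := hx
        obtain ⟨βy, hβy, αy, hαy, rfl⟩ := hy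
        refine ⟨βx + βy, add_mem hβx hβy, αx + αy, add_mem hαx hαy, by
          rw [mul_add]; abel⟩

end Decomp

/-- for `γ ∈ ⋀^ℓ F`, one has `γ ∈ J^ℓ` (i.e. `γ ∧ θ = 0` and `γ ∧ ω = 0`)
if and only if `γ = θ ∧ α` for some `α ∈ ⋀^{ℓ-1} E` with `ω ∧ α = 0`. -/
theorem memJ_iff {F : Type*} [AddCommGroup F] [Module ℝ F] [FiniteDimensional ℝ F]
    (n : ℕ) (hn : 1 ≤ n) (hdimF : Module.finrank ℝ F = 2 * n + 1)
    (E : Submodule ℝ F) (hdimE : Module.finrank ℝ E = 2 * n)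
    (θ : F) (hθ : θ ∉ E)
    (ω : ExteriorAlgebra ℝ F) (hω : ω ∈ powE E 2) (hωn : ω ^ n ≠ 0)
    (ℓ : ℕ) (γ : ExteriorAlgebra ℝ F) (hγ : γ ∈ ⋀[ℝ]^ℓ F) :
    (γ * ι ℝ θ = 0 ∧ γ * ω = 0) ↔
      ∃ α ∈ powE E ((ℓ : ℤ) - 1), ω * α = 0 ∧ γ = ι ℝ θ * α := by
  classical
  set P := Submodule.map (ι ℝ) E with hPdef
  -- F = E + ℝθ
  have hsup : E ⊔ (ℝ ∙ θ) = ⊤ := by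
    apply Submodule.eq_top_of_finrank_eq
    have h1 : E < E ⊔ (ℝ ∙ θ) := by
      refine lt_of_le_of_ne le_sup_left (fun h => hθ ?_)
      rw [h]
      exact Submodule.mem_sup_right (Submodule.mem_span_singleton_self θ)
    have h2 := Submodule.finrank_lt_finrank_of_lt h1
    have h3 := Submodule.finrank_le (E ⊔ (ℝ ∙ θ))
    omega
  have hsplit : ∀ v : F, ∃ e ∈ E, ∃ c : ℝ, v = e + c • θ := by
    intro v
    have hv : v ∈ E ⊔ (ℝ ∙ θ) := hsup ▸ Submodule.mem_top
    obtain ⟨e, he, s, hs, rfl⟩ := Submodule.mem_sup.mp hv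
    obtain ⟨c, rfl⟩ := Submodule.mem_span_singleton.mp hs
    exact ⟨e, he, c, rfl⟩
  -- dual functional
  obtain ⟨f₀, hf₀, hker⟩ := Submodule.exists_dual_map_eq_bot_of_notMem hθ inferInstance
  set f : Module.Dual ℝ F := (f₀ θ)⁻¹ • f₀ with hfdef
  have hfθ : f θ = 1 := by
    simp [hfdef, inv_mul_cancel₀ hf₀]
  have hfE : ∀ e ∈ E, f e = 0 := by
    intro e he
    have h0 : f₀ e = 0 := by
      have : f₀ e ∈ Submodule.map f₀ E := ⟨e, he, rfl⟩
      rwa [hker, Submodule.mem_bot] at this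
    simp [hfdef, h0]
  set D : ExteriorAlgebra ℝ F →ₗ[ℝ] ExteriorAlgebra ℝ F :=
    CliffordAlgebra.contractLeft (Q := (0 : QuadraticForm ℝ F)) f with hDdef
  have hD : ∀ (k : ℕ) (x : ExteriorAlgebra ℝ F), x ∈ P ^ k → D x = 0 :=
    contract_powE E f hfE
  have hDθ : ∀ x : ExteriorAlgebra ℝ F, D (ι ℝ θ * x) = x - ι ℝ θ * D x := by
    intro x
    rw [hDdef]
    rw [CliffordAlgebra.contractLeft_ι_mul, hfθ, one_smul]
  have hinj : ∀ (k : ℕ) (x : ExteriorAlgebra ℝ F),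
      x ∈ P ^ k → ι ℝ θ * x = 0 → x = 0 := by
    intro k x hx h0
    have h := hDθ x
    rw [h0, map_zero, hD k x hx, mul_zero, sub_zero] at h
    exact h.symm
  have hPle : ∀ k : ℕ, P ^ k ≤ (LinearMap.range (ι ℝ : F →ₗ[ℝ] ExteriorAlgebra ℝ F)) ^ k :=
    fun k => pow_mono (LinearMap.map_le_range) k
  have hω2 : ω ∈ P ^ 2 := by
    have h := hω
    rw [powE] at h
    simpa using h
  have hcast : ∀ {x : ExteriorAlgebra ℝ F}, x ∈ powE E ((ℓ : ℤ) - 1) →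
      ∃ k : ℕ, x ∈ P ^ k := by
    intro x hx
    cases ℓ with
    | zero =>
        rw [show ((0:ℕ):ℤ) - 1 = -1 by simp, powE_neg_one, Submodule.mem_bot] at hx
        exact ⟨0, by rw [hx]; exact Submodule.zero_mem _⟩
    | succ m =>
        rw [show (((m:ℕ)+1:ℕ):ℤ) - 1 = (m:ℤ) by push_cast; ring, powE_natCast] at hx
        exact ⟨m, hx⟩
  constructor
  · rintro ⟨h1, h2⟩
    obtain ⟨β, hβ, α, hα, rfl⟩ := decomp E θ hsplit ℓ γ hγ
    obtain ⟨k, hk⟩ := hcast hα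
    have hβP : β ∈ P ^ ℓ := by rwa [powE_natCast] at hβ
    -- kill the α-term of `γ * ι θ`
    rw [add_mul, mul_assoc, theta_anticomm θ k α (hPle k hk), mul_smul_comm,
      ← mul_assoc (ι ℝ θ), ι_sq_zero, zero_mul, smul_zero, add_zero,
      theta_anticomm θ ℓ β (hPle ℓ hβP)] at h1
    have hθβ : ι ℝ θ * β = 0 := by
      rcases smul_eq_zero.mp h1 with h | h
      · exact absurd h (pow_ne_zero ℓ (neg_ne_zero.mpr one_ne_zero))
      · exact h
    have hβ0 : β = 0 := hinj ℓ β hβP hθβ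
    subst hβ0
    rw [zero_add] at h2 ⊢
    have hωα0 : ω * α = 0 := by
      rw [mul_assoc, ← (even_commute hω2 α).eq] at h2
      have hmem : ω * α ∈ P ^ (2 + k) := by
        rw [pow_add]
        exact Submodule.mul_mem_mul hω2 hk
      exact hinj (2 + k) (ω * α) hmem h2
    exact ⟨α, hα, hωα0, rfl⟩
  · rintro ⟨α, hα, hωα, rfl⟩
    obtain ⟨k, hk⟩ := hcast hα
    constructor
    · rw [mul_assoc, theta_anticomm θ k α (hPle k hk), mul_smul_comm,
        ← mul_assoc (ι ℝ θ), ι_sq_zero, zero_mul, smul_zero]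
    · rw [mul_assoc, ← (even_commute hω2 α).eq, hωα, mul_zero]
end

section
/- Let Φ : g → g' be a Lie algebra homomorphism with Φ(V_j) ⊆ V'_j for every j, and suppose that the restriction of Φ to ⊕_{j≥2} V_j is a linear isomorphism onto ⊕_{j≥2} V'_j. Then: (i) ker Φ ⊆ V_1; (ii) ker Φ is a Lie ideal of g; and (iii) ker Φ is abelian, i.e. ⁅x, y⁆ = 0 for all x, y ∈ ker Φ. -/
lemma indep_finsupp_sum_eq_zero {N : Type*} [AddCommGroup N] [Module ℝ N]
    {p : ℕ → Submodule ℝ N} (hp : iSupIndep p)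
    (f : ℕ →₀ N) (hf : ∀ i, f i ∈ p i) (hsum : (f.sum fun _ x => x) = 0) :
    ∀ i, f i = 0 := by
  intro i
  by_cases hi : i ∈ f.support
  · have hadd : f i + ∑ j ∈ f.support.erase i, f j = 0 := by
      rw [Finset.add_sum_erase f.support f hi]
      simpa [Finsupp.sum] using hsum
    have hrest : f i = - ∑ j ∈ f.support.erase i, f j :=
      eq_neg_of_add_eq_zero_left hadd
    have hmem : f i ∈ ⨆ j, ⨆ (_ : j ≠ i), p j := by
      rw [hrest]
      refine neg_mem (Submodule.sum_mem _ fun j hj => ?_)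
      have hji : j ≠ i := (Finset.mem_erase.mp hj).1
      exact Submodule.mem_iSup_of_mem j (Submodule.mem_iSup_of_mem hji (hf j))
    have hdisj := hp i
    exact (Submodule.disjoint_def.mp hdisj) (f i) (hf i) hmem
  · simpa using Finsupp.notMem_support_iff.mp hi

/-- if `Φ : g → g'` is a graded Lie algebra homomorphism between graded
Lie algebras `g = V_1 ⊕ ⋯ ⊕ V_s` and `g' = V'_1 ⊕ ⋯ ⊕ V'_{s'}` whose restriction to
`⊕_{j≥2} V_j` is a linear isomorphism onto `⊕_{j≥2} V'_j`, then `ker Φ ⊆ V_1`,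
`ker Φ` is a Lie ideal, and `ker Φ` is abelian. -/
theorem graded_lie_hom_kernel {g g' : Type*}
    [LieRing g] [LieAlgebra ℝ g] [FiniteDimensional ℝ g]
    [LieRing g'] [LieAlgebra ℝ g'] [FiniteDimensional ℝ g']
    (s s' : ℕ) (hs : 1 ≤ s) (hs' : 1 ≤ s')
    (V : ℕ → Submodule ℝ g) (V' : ℕ → Submodule ℝ g')
    -- the grading of `g`: `g = V_1 ⊕ ⋯ ⊕ V_s` with `⁅V_i, V_j⁆ ⊆ V_{i+j}`
    (hV0 : V 0 = ⊥) (hVtop : ∀ j, s < j → V j = ⊥)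
    (hVsup : ⨆ j, V j = ⊤) (hVindep : iSupIndep V)
    (hVbr : ∀ i j, ∀ x ∈ V i, ∀ y ∈ V j, ⁅x, y⁆ ∈ V (i + j))
    -- the grading of `g'`
    (hV'0 : V' 0 = ⊥) (hV'top : ∀ j, s' < j → V' j = ⊥)
    (hV'sup : ⨆ j, V' j = ⊤) (hV'indep : iSupIndep V')
    (hV'br : ∀ i j, ∀ x ∈ V' i, ∀ y ∈ V' j, ⁅x, y⁆ ∈ V' (i + j))
    -- `Φ` is a graded Lie algebra homomorphism
    (Φ : g →ₗ⁅ℝ⁆ g') (hΦgr : ∀ j, Submodule.map Φ.toLinearMap (V j) ≤ V' j)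
    -- the restriction of `Φ` to `⊕_{j≥2} V_j` is a linear isomorphism onto `⊕_{j≥2} V'_j`
    (hinj : ∀ x ∈ ⨆ j, ⨆ (_ : 2 ≤ j), V j, Φ x = 0 → x = 0)
    (honto : Submodule.map Φ.toLinearMap (⨆ j, ⨆ (_ : 2 ≤ j), V j) =
      ⨆ j, ⨆ (_ : 2 ≤ j), V' j) :
    -- (i) `ker Φ ⊆ V_1`; (ii) `ker Φ` is a Lie ideal; (iii) `ker Φ` is abelian
    (∀ x : g, Φ x = 0 → x ∈ V 1) ∧
    (∀ x y : g, Φ y = 0 → Φ ⁅x, y⁆ = 0) ∧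
    (∀ x y : g, Φ x = 0 → Φ y = 0 → ⁅x, y⁆ = 0) := by
  have part1 : ∀ x : g, Φ x = 0 → x ∈ V 1 := by
    intro x hx
    have hxm : x ∈ ⨆ j, V j := by rw [hVsup]; trivial
    obtain ⟨f, hf, hsum⟩ := (Submodule.mem_iSup_iff_exists_finsupp V x).mp hxm
    -- push the decomposition through Φ
    set c : ℕ →₀ g' := Finsupp.mapRange (⇑Φ) Φ.map_zero f with hc
    have hcmem : ∀ j, c j ∈ V' j := fun j =>
      hΦgr j ⟨f j, hf j, by simp [hc]⟩
    have hcsum : (c.sum fun _ x => x) = 0 := by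
      rw [hc, Finsupp.sum_mapRange_index (fun _ => rfl)]
      rw [← hx, ← hsum, Finsupp.sum, Finsupp.sum]
      exact (map_sum Φ.toLinearMap _ _).symm
    have hczero : ∀ j, Φ (f j) = 0 := by
      intro j
      have := indep_finsupp_sum_eq_zero hV'indep c hcmem hcsum j
      simpa [hc] using this
    -- each component other than the first vanishes
    have hfzero : ∀ j, j ≠ 1 → f j = 0 := by
      intro j hj
      match j, hj with
      | 0, _ => have := hf 0; rw [hV0] at this; simpa using this
      | (k+2), _ =>
        refine hinj (f (k+2)) ?_ (hczero (k+2))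
        exact Submodule.mem_iSup_of_mem (k+2)
          (Submodule.mem_iSup_of_mem (by omega) (hf (k+2)))
    have hx1 : x = f 1 := by
      rw [← hsum]
      exact Finsupp.sum_eq_single 1
        (fun b _ hb => hfzero b hb) (fun _ => rfl)
    rw [hx1]; exact hf 1
  refine ⟨part1, fun x y hy => by rw [LieHom.map_lie, hy, lie_zero], ?_⟩
  intro x y hx hy
  have hx1 := part1 x hx
  have hy1 := part1 y hy
  have hbr : ⁅x, y⁆ ∈ V 2 := hVbr 1 1 x hx1 y hy1
  have hmem : ⁅x, y⁆ ∈ ⨆ j, ⨆ (_ : 2 ≤ j), V j :=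
    Submodule.mem_iSup_of_mem 2 (Submodule.mem_iSup_of_mem le_rfl hbr)
  exact hinj _ hmem (by rw [LieHom.map_lie, hx, zero_lie])
end
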